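/- arXiv:1709.09907 — 4 statements merged into one kernel-verified Lean document; each statement's English description precedes it below -/
import Mathlib

section
/- Let t ∈ S'(R^N) be a tempered distribution with 0 ∉ supp t. Then the Steinmann scaling degree of t with respect to the origin equals −∞; that is, for every real s and every Schwartz function g, lim_{λ→0+} λ^s ∫ t(λx) g(x) dx = 0. -/
open MeasureTheory Filter Topology SchwartzMap

noncomputable section

abbrev Rn (N : ℕ) : Type := EuclideanSpace ℝ (Fin N)
abbrev TestFun (N : ℕ) := SchwartzMap (Rn N) ℂ
abbrev TDist (N : ℕ) := TestFun N →L[ℂ] ℂ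

/-- The continuous linear equivalence `x ↦ a • x` of a real normed space, for `a ≠ 0`. -/
def smulCLE (E : Type*) [NormedAddCommGroup E] [NormedSpace ℝ E] (a : ℝ) (ha : a ≠ 0) :
    E ≃L[ℝ] E :=
  { LinearEquiv.smulOfNeZero ℝ E a ha with
    continuous_toFun := continuous_const_smul a
    continuous_invFun := continuous_const_smul a⁻¹ }

/-- Composition with the dilation `x ↦ a • x` as a continuous linear map on Schwartz space
(defined to be `0` for `a = 0`).  `(scaleHomCLM E a g) x = g (a • x)` for `a ≠ 0`. -/
def scaleHomCLM (E : Type*) [NormedAddCommGroup E] [NormedSpace ℝ E] (a : ℝ) :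
    SchwartzMap E ℂ →L[ℂ] SchwartzMap E ℂ :=
  if ha : a = 0 then 0 else
    SchwartzMap.compCLMOfContinuousLinearEquiv ℂ (smulCLE E a ha)

/-- The set of real `s` such that `λ^s ⟨t(λ·), g⟩ = λ^s λ^{-K} ⟨t, g(·/λ)⟩ → 0` as `λ → 0⁺`
for every Schwartz `g`; its infimum is the Steinmann scaling degree.  Here `K` is the
dimension of the underlying space `E`. -/
def sdSet (E : Type*) [NormedAddCommGroup E] [NormedSpace ℝ E] (K : ℕ)
    (t : SchwartzMap E ℂ →L[ℂ] ℂ) : Set ℝ :=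
  {s : ℝ | ∀ g : SchwartzMap E ℂ,
    Tendsto (fun lam : ℝ => ((lam ^ s * (lam ^ K)⁻¹ : ℝ) : ℂ) * t (scaleHomCLM E lam⁻¹ g))
      (𝓝[>] (0:ℝ)) (𝓝 (0:ℂ))}

/-- The Steinmann scaling degree `sd(t) = inf { s | … } ∈ ℝ ∪ {±∞}`. -/
def scalingDegree (E : Type*) [NormedAddCommGroup E] [NormedSpace ℝ E] (K : ℕ)
    (t : SchwartzMap E ℂ →L[ℂ] ℂ) : EReal :=
  sInf ((fun s : ℝ => (s : EReal)) '' sdSet E K t)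

/-!
Choose a bump function `χ` equal to `1` near the origin and supported where `t` vanishes, so that
`⟨t, g(·/λ)⟩ = ⟨t, (1 - χ) g(·/λ)⟩`. Since `1 - χ` vanishes on a ball `‖x‖ < r`, each Schwartz
seminorm of `(1 - χ) g(·/λ)` only sees `g` at points `x/λ` with `‖x/λ‖ ≥ r/λ`, where the rapid
decay of `g` makes it `O(λ^m)` for every `m`. Continuity of `t` transfers this to
`⟨t, g(·/λ)⟩ = O(λ^m)`, which absorbs any prefactor `λ^(s-N)`.
-/

open Set Metric Distribution Asymptotics
open scoped ContDiff

section

variable {E F : Type*} [NormedAddCommGroup E] [NormedSpace ℝ E]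
  [NormedAddCommGroup F] [NormedSpace ℝ F]

theorem norm_iteratedFDeriv_comp_smul_le {g : E → F} (hg : ContDiff ℝ ∞ g) (c : ℝ) (j : ℕ)
    (x : E) :
    ‖iteratedFDeriv ℝ j (fun y => g (c • y)) x‖ ≤ |c| ^ j * ‖iteratedFDeriv ℝ j g (c • x)‖ := by
  have hcomp := (c • ContinuousLinearMap.id ℝ E).iteratedFDeriv_comp_right hg x
    (i := j) (mod_cast le_top)
  simp only [Function.comp_def, FunLike.coe_smul, Pi.smul_apply,
    ContinuousLinearMap.id_apply] at hcomp
  rw [hcomp]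
  refine (ContinuousMultilinearMap.norm_compContinuousLinearMap_le _ _).trans ?_
  rw [Finset.prod_const, Finset.card_univ, Fintype.card_fin, mul_comm]
  gcongr
  calc ‖c • ContinuousLinearMap.id ℝ E‖ ≤ ‖c‖ * ‖ContinuousLinearMap.id ℝ E‖ :=
        ContinuousLinearMap.opNorm_smul_le c _
    _ ≤ |c| := by
      simpa using mul_le_of_le_one_right (abs_nonneg c) ContinuousLinearMap.norm_id_le

theorem exists_bound_norm_iteratedFDeriv_one_sub {χ : E → ℝ} (hχ : ContDiff ℝ ∞ χ)
    (hχc : HasCompactSupport χ) (i : ℕ) :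
    ∃ B, ∀ x, ‖iteratedFDeriv ℝ i (fun y => 1 - χ y) x‖ ≤ B := by
  obtain ⟨B, hB⟩ := (hχc.iteratedFDeriv i).exists_bound_of_continuous
    (hχ.continuous_iteratedFDeriv (mod_cast le_top))
  refine ⟨1 + B, fun x => ?_⟩
  have hconst : ‖iteratedFDeriv ℝ i (fun _ : E => (1 : ℝ)) x‖ ≤ 1 := by
    cases i with
    | zero => simp
    | succ i => simp [iteratedFDeriv_const_of_ne]
  change ‖iteratedFDeriv ℝ i ((fun _ => 1) - χ) x‖ ≤ 1 + B
  rw [iteratedFDeriv_sub_apply contDiff_const.contDiffAt (hχ.of_le (mod_cast le_top)).contDiffAt]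
  exact (norm_sub_le _ _).trans (add_le_add hconst (hB x))

namespace SchwartzMap

theorem pow_mul_norm_iteratedFDeriv_comp_inv_smul_le (g : 𝓢(E, F)) {l : ℝ} (hl : 0 < l)
    (j p : ℕ) (x : E) :
    ‖x‖ ^ (j + p) * ‖iteratedFDeriv ℝ j (fun y => g (l⁻¹ • y)) x‖ ≤
      l ^ p * SchwartzMap.seminorm ℝ (j + p) j g := by
  have hscale : ‖iteratedFDeriv ℝ j (fun y => g (l⁻¹ • y)) x‖ ≤
      l⁻¹ ^ j * ‖iteratedFDeriv ℝ j g (l⁻¹ • x)‖ := by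
    simpa [abs_of_pos hl] using norm_iteratedFDeriv_comp_smul_le (g.smooth ⊤) l⁻¹ j x
  calc ‖x‖ ^ (j + p) * ‖iteratedFDeriv ℝ j (fun y => g (l⁻¹ • y)) x‖
      ≤ ‖x‖ ^ (j + p) * (l⁻¹ ^ j * ‖iteratedFDeriv ℝ j g (l⁻¹ • x)‖) := by gcongr
    _ = l ^ p * (‖l⁻¹ • x‖ ^ (j + p) * ‖iteratedFDeriv ℝ j g (l⁻¹ • x)‖) := by
      rw [norm_smul, Real.norm_of_nonneg (inv_nonneg.2 hl.le), mul_pow, inv_pow, inv_pow,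
        pow_add l]
      field_simp
    _ ≤ l ^ p * SchwartzMap.seminorm ℝ (j + p) j g := by gcongr; exact le_seminorm ℝ _ _ g _

theorem pow_mul_norm_iteratedFDeriv_comp_inv_smul_le_of_le_norm (g : 𝓢(E, F)) {l : ℝ}
    (hl₀ : 0 < l) (hl₁ : l ≤ 1) {r : ℝ} (hr : 0 < r) {x : E} (hx : r ≤ ‖x‖) (k j m : ℕ) :
    ‖x‖ ^ k * ‖iteratedFDeriv ℝ j (fun y => g (l⁻¹ • y)) x‖ ≤
      SchwartzMap.seminorm ℝ (j + (k + m)) j g / r ^ (j + m) * l ^ m := by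
  rw [div_mul_eq_mul_div, le_div_iff₀ (by positivity)]
  calc ‖x‖ ^ k * ‖iteratedFDeriv ℝ j (fun y => g (l⁻¹ • y)) x‖ * r ^ (j + m)
      ≤ ‖x‖ ^ k * ‖iteratedFDeriv ℝ j (fun y => g (l⁻¹ • y)) x‖ * ‖x‖ ^ (j + m) := by gcongr
    _ = ‖x‖ ^ (j + (k + m)) * ‖iteratedFDeriv ℝ j (fun y => g (l⁻¹ • y)) x‖ := by ring
    _ ≤ l ^ (k + m) * SchwartzMap.seminorm ℝ (j + (k + m)) j g :=
      pow_mul_norm_iteratedFDeriv_comp_inv_smul_le g hl₀ j (k + m) x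
    _ ≤ SchwartzMap.seminorm ℝ (j + (k + m)) j g * l ^ m := by
      rw [mul_comm]
      exact mul_le_mul_of_nonneg_left (pow_le_pow_of_le_one hl₀.le hl₁ (Nat.le_add_left m k))
        (apply_nonneg _ _)

theorem exists_pow_mul_norm_iteratedFDeriv_smul_comp_inv_smul_le {ψ : E → ℝ}
    (hψ : ContDiff ℝ ∞ ψ) (hψB : ∀ i, ∃ B, ∀ x, ‖iteratedFDeriv ℝ i ψ x‖ ≤ B) {r : ℝ}
    (hr : 0 < r) (hψ₀ : EqOn ψ 0 (ball 0 r)) (g : 𝓢(E, F)) (k n m : ℕ) :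
    ∃ C, ∀ l : ℝ, 0 < l → l ≤ 1 → ∀ x : E,
      ‖x‖ ^ k * ‖iteratedFDeriv ℝ n (fun y => ψ y • g (l⁻¹ • y)) x‖ ≤ C * l ^ m := by
  choose B hB using hψB
  have hB₀ : ∀ i, 0 ≤ B i := fun i => (norm_nonneg _).trans (hB i 0)
  set P : ℕ → ℝ := fun j => SchwartzMap.seminorm ℝ (j + (k + m)) j g / r ^ (j + m)
  refine ⟨∑ i ∈ Finset.range (n + 1), n.choose i * (B i * P (n - i)),
    fun l hl₀ hl₁ x => ?_⟩
  have hterm : ∀ i, ‖iteratedFDeriv ℝ i ψ x‖ *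
      (‖x‖ ^ k * ‖iteratedFDeriv ℝ (n - i) (fun y => g (l⁻¹ • y)) x‖) ≤
        B i * (P (n - i) * l ^ m) := by
    intro i
    rcases lt_or_ge ‖x‖ r with hx | hx
    · have hψx : x ∉ tsupport ψ := by
        rw [notMem_tsupport_iff_eventuallyEq]
        filter_upwards [isOpen_ball.mem_nhds (mem_ball_zero_iff.2 hx)] with y hy using hψ₀ hy
      rw [Function.notMem_support.1 fun h => hψx (support_iteratedFDeriv_subset i h), norm_zero,
        zero_mul]
      exact mul_nonneg (hB₀ i) (mul_nonneg (div_nonneg (apply_nonneg _ _) (by positivity))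
        (by positivity))
    · exact mul_le_mul (hB i x) (pow_mul_norm_iteratedFDeriv_comp_inv_smul_le_of_le_norm g hl₀ hl₁
        hr hx k (n - i) m) (by positivity) (hB₀ i)
  have hg : ContDiff ℝ ∞ (fun y => g (l⁻¹ • y)) := (g.smooth ⊤).comp (contDiff_const_smul l⁻¹)
  calc ‖x‖ ^ k * ‖iteratedFDeriv ℝ n (fun y => ψ y • g (l⁻¹ • y)) x‖
      ≤ ‖x‖ ^ k * ∑ i ∈ Finset.range (n + 1), (n.choose i : ℝ) * ‖iteratedFDeriv ℝ i ψ x‖ *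
          ‖iteratedFDeriv ℝ (n - i) (fun y => g (l⁻¹ • y)) x‖ := by
        gcongr
        exact norm_iteratedFDeriv_smul_le hψ hg x (mod_cast le_top)
    _ = ∑ i ∈ Finset.range (n + 1), (n.choose i : ℝ) * (‖iteratedFDeriv ℝ i ψ x‖ *
          (‖x‖ ^ k * ‖iteratedFDeriv ℝ (n - i) (fun y => g (l⁻¹ • y)) x‖)) := by
        rw [Finset.mul_sum]
        exact Finset.sum_congr rfl fun i _ => by ring
    _ ≤ ∑ i ∈ Finset.range (n + 1), (n.choose i : ℝ) * (B i * (P (n - i) * l ^ m)) := by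
        refine Finset.sum_le_sum fun i _ => ?_
        exact mul_le_mul_of_nonneg_left (hterm i) (Nat.cast_nonneg _)
    _ = (∑ i ∈ Finset.range (n + 1), n.choose i * (B i * P (n - i))) * l ^ m := by
        rw [Finset.sum_mul]
        exact Finset.sum_congr rfl fun i _ => by ring

theorem apply_smulLeftCLM_one_sub_eq {Φ G : Type*} [AddCommGroup G] [FunLike Φ 𝓢(E, F) G]
    [AddMonoidHomClass Φ 𝓢(E, F) G] {T : Φ} {U : Set E} (hT : IsVanishingOn T U)
    {χ : E → ℝ} (hχ : χ.HasTemperateGrowth) (hχU : tsupport χ ⊆ U) (f : 𝓢(E, F)) :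
    T (smulLeftCLM F (fun x => 1 - χ x) f) = T f := by
  have hψ : (fun x => 1 - χ x).HasTemperateGrowth := (Function.HasTemperateGrowth.const 1).sub hχ
  have hdiff : smulLeftCLM F (fun x => 1 - χ x) f = f - smulLeftCLM F χ f := by
    ext x
    simp [smulLeftCLM_apply_apply hψ, smulLeftCLM_apply_apply hχ, sub_smul]
  have hsupp : tsupport (smulLeftCLM F χ f) ⊆ U := by
    rw [smulLeftCLM_apply hχ]
    exact (tsupport_smul_subset_left _ _).trans hχU
  rw [hdiff, map_sub, hT _ hsupp, sub_zero]

section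

variable {𝕜 G : Type*} [NontriviallyNormedField 𝕜] [NormedSpace 𝕜 F] [SMulCommClass ℝ 𝕜 F]
  [NormedAddCommGroup G] [NormedSpace 𝕜 G]

theorem isBigO_apply_of_isBigO_seminorm (T : 𝓢(E, F) →L[𝕜] G) {α : Type*} {L : Filter α}
    {φ : α → 𝓢(E, F)} {u : α → ℝ}
    (h : ∀ k n, (fun a => SchwartzMap.seminorm 𝕜 k n (φ a)) =O[L] u) :
    (fun a => T (φ a)) =O[L] u := by
  obtain ⟨s, C, -, hC⟩ := Seminorm.bound_of_continuous (schwartz_withSeminorms 𝕜 E F)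
    ((normSeminorm 𝕜 G).comp T.toLinearMap) T.continuous.norm
  have hsum : (fun a => ∑ p ∈ s, schwartzSeminormFamily 𝕜 E F p (φ a)) =O[L] u :=
    IsBigO.fun_sum fun (p : ℕ × ℕ) _ => h p.1 p.2
  refine (IsBigO.of_bound C (Eventually.of_forall fun a => ?_)).trans hsum
  have hsup : s.sup (schwartzSeminormFamily 𝕜 E F) (φ a) ≤
      ∑ p ∈ s, schwartzSeminormFamily 𝕜 E F p (φ a) :=
    Seminorm.finset_sup_apply_le (Finset.sum_nonneg fun p _ => apply_nonneg _ _)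
      fun p hp => Finset.single_le_sum (fun q _ => apply_nonneg _ (φ a)) hp
  calc ‖T (φ a)‖ ≤ C * s.sup (schwartzSeminormFamily 𝕜 E F) (φ a) := hC (φ a)
    _ ≤ C * ‖∑ p ∈ s, schwartzSeminormFamily 𝕜 E F p (φ a)‖ := by
      rw [Real.norm_of_nonneg (Finset.sum_nonneg fun p _ => apply_nonneg _ _)]
      gcongr

end

end SchwartzMap

end

section

variable {E : Type*} [NormedAddCommGroup E] [NormedSpace ℝ E]

theorem scaleHomCLM_apply {a : ℝ} (ha : a ≠ 0) (g : SchwartzMap E ℂ) (x : E) :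
    scaleHomCLM E a g x = g (a • x) := by
  simp only [scaleHomCLM, dif_neg ha, compCLMOfContinuousLinearEquiv_apply]
  rfl

theorem isBigO_seminorm_smulLeftCLM_scaleHomCLM_inv {ψ : E → ℝ} (hψ : ContDiff ℝ ∞ ψ)
    (hψB : ∀ i, ∃ B, ∀ x, ‖iteratedFDeriv ℝ i ψ x‖ ≤ B) {r : ℝ} (hr : 0 < r)
    (hψ₀ : EqOn ψ 0 (ball 0 r)) (g : SchwartzMap E ℂ) (k n m : ℕ) :
    (fun l : ℝ => SchwartzMap.seminorm ℂ k n (smulLeftCLM ℂ ψ (scaleHomCLM E l⁻¹ g)))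
      =O[𝓝[>] 0] fun l => l ^ m := by
  have hψt : ψ.HasTemperateGrowth := by
    refine ⟨hψ, fun i => ?_⟩
    obtain ⟨B, hB⟩ := hψB i
    exact ⟨0, B, fun x => by simpa using hB x⟩
  obtain ⟨C, hC⟩ :=
    SchwartzMap.exists_pow_mul_norm_iteratedFDeriv_smul_comp_inv_smul_le hψ hψB hr hψ₀ g k n m
  refine IsBigO.of_bound C ?_
  filter_upwards [Ioc_mem_nhdsGT zero_lt_one] with l ⟨hl₀, hl₁⟩
  have hcoe : ⇑(smulLeftCLM ℂ ψ (scaleHomCLM E l⁻¹ g)) = fun y => ψ y • g (l⁻¹ • y) := by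
    ext y
    simp [smulLeftCLM_apply_apply hψt, scaleHomCLM_apply (inv_ne_zero hl₀.ne')]
  rw [Real.norm_of_nonneg (apply_nonneg _ _), Real.norm_of_nonneg (by positivity)]
  refine SchwartzMap.seminorm_le_bound ℂ k n _ ((by positivity : (0 : ℝ) ≤ _).trans
    (hC l hl₀ hl₁ 0)) fun x => ?_
  rw [hcoe]
  exact hC l hl₀ hl₁ x

variable [FiniteDimensional ℝ E]

theorem isBigO_apply_scaleHomCLM_inv_of_isVanishingOn {t : SchwartzMap E ℂ →L[ℂ] ℂ} {U : Set E}
    (hU : U ∈ 𝓝 0) (ht : IsVanishingOn t U) (g : SchwartzMap E ℂ) (m : ℕ) :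
    (fun l : ℝ => t (scaleHomCLM E l⁻¹ g)) =O[𝓝[>] 0] fun l => l ^ m := by
  obtain ⟨R, hR, hRU⟩ := Metric.mem_nhds_iff.1 hU
  let χ : ContDiffBump (0 : E) := ⟨R / 4, R / 2, by positivity, by linarith⟩
  have hχU : tsupport χ ⊆ U := by
    rw [χ.tsupport_eq]
    exact (closedBall_subset_ball (by change R / 2 < R; linarith)).trans hRU
  have hψ₀ : EqOn (fun x => 1 - χ x) 0 (ball 0 χ.rIn) := fun x hx => by
    simp [χ.one_of_mem_closedBall (ball_subset_closedBall hx)]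
  have hcut : ∀ l : ℝ, t (scaleHomCLM E l⁻¹ g) =
      t (smulLeftCLM ℂ (fun x => 1 - χ x) (scaleHomCLM E l⁻¹ g)) := fun l =>
    (apply_smulLeftCLM_one_sub_eq ht (χ.hasCompactSupport.hasTemperateGrowth χ.contDiff) hχU
      _).symm
  simp only [hcut]
  exact SchwartzMap.isBigO_apply_of_isBigO_seminorm t fun k n =>
    isBigO_seminorm_smulLeftCLM_scaleHomCLM_inv (contDiff_const.sub χ.contDiff)
      (exists_bound_norm_iteratedFDeriv_one_sub χ.contDiff χ.hasCompactSupport) χ.rIn_pos hψ₀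
      g k n m

end

theorem tendsto_rpow_mul_inv_pow_mul_nhdsGT_zero {u : ℝ → ℂ}
    (hu : ∀ m : ℕ, u =O[𝓝[>] 0] fun l => l ^ m) (s : ℝ) (K : ℕ) :
    Tendsto (fun l : ℝ => ((l ^ s * (l ^ K)⁻¹ : ℝ) : ℂ) * u l) (𝓝[>] 0) (𝓝 0) := by
  obtain ⟨m, hm⟩ := exists_nat_gt ((K : ℝ) - s)
  have hpos : 0 < s - K + m := by linarith
  have hrpow : Tendsto (fun l : ℝ => l ^ (s - K + m)) (𝓝[>] 0) (𝓝 0) := by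
    simpa [Real.zero_rpow hpos.ne'] using
      (Real.continuousAt_rpow_const 0 _ (Or.inr hpos.le)).tendsto.mono_left nhdsWithin_le_nhds
  have heq : (fun l : ℝ => l ^ (s - K + m)) =ᶠ[𝓝[>] 0] fun l => l ^ s * (l ^ K)⁻¹ * l ^ m := by
    filter_upwards [self_mem_nhdsWithin] with l (hl : 0 < l)
    rw [Real.rpow_add hl, Real.rpow_sub hl, Real.rpow_natCast, Real.rpow_natCast, div_eq_mul_inv]
  exact ((Complex.isBigO_ofReal_left.2 (isBigO_refl _ _)).mul (hu m)).trans_tendsto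
    (hrpow.congr' heq)

theorem scalingDegree_eq_bot_of_forall_mem_sdSet {E : Type*} [NormedAddCommGroup E]
    [NormedSpace ℝ E] {K : ℕ} {t : SchwartzMap E ℂ →L[ℂ] ℂ} (h : ∀ s, s ∈ sdSet E K t) :
    scalingDegree E K t = ⊥ := by
  rw [scalingDegree, sInf_eq_bot]
  intro b hb
  obtain ⟨y, -, hy⟩ := EReal.exists_between_coe_real hb
  exact ⟨y, ⟨y, h y, rfl⟩, hy⟩

theorem mem_sdSet_of_isVanishingOn {E : Type*} [NormedAddCommGroup E] [NormedSpace ℝ E]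
    [FiniteDimensional ℝ E] {t : SchwartzMap E ℂ →L[ℂ] ℂ} {U : Set E} (hU : U ∈ 𝓝 0)
    (ht : IsVanishingOn t U) (K : ℕ) (s : ℝ) : s ∈ sdSet E K t := fun g =>
  tendsto_rpow_mul_inv_pow_mul_nhdsGT_zero
    (isBigO_apply_scaleHomCLM_inv_of_isVanishingOn hU ht g) s K

/-- If `t ∈ S'(ℝ^N)` satisfies `0 ∉ supp t`, then its Steinmann scaling
degree with respect to the origin is `−∞`: every real `s` belongs to the defining set,
i.e. for every `s` and every Schwartz `g`, `lim_{λ→0⁺} λ^s ∫ t(λx) g(x) dx = 0`. -/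
theorem scalingDegree_eq_bot_of_notMem_support {N : ℕ} (t : TDist N)
    (h0 : ∃ U ∈ 𝓝 (0 : Rn N), ∀ g : TestFun N, tsupport ⇑g ⊆ U → t g = 0) :
    (∀ s : ℝ, s ∈ sdSet (Rn N) N t) ∧ scalingDegree (Rn N) N t = ⊥ := by
  obtain ⟨U, hU, ht⟩ := h0
  have hmem : ∀ s : ℝ, s ∈ sdSet (Rn N) N t := mem_sdSet_of_isVanishingOn hU ht N
  exact ⟨hmem, scalingDegree_eq_bot_of_forall_mem_sdSet hmem⟩
end
end

section
/- If t ∈ S'(R^N) is homogeneous of degree d (i.e. t(λx) = λ^d t(x) for all λ > 0), then the Steinmann scaling degree of t equals −d. -/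
/-!
Homogeneity turns the rescaled pairing `λ^s λ^{-N} ⟨t, g(·/λ)⟩` into exactly `λ^{s+d} ⟨t, g⟩`.
As `λ → 0⁺` this tends to `0` for every `g` iff `s + d > 0`, the direction `⇒` using a `g`
with `⟨t, g⟩ ≠ 0`. So the admissible exponents form the ray `(-d, ∞)`, whose infimum is `-d`.
-/

open MeasureTheory Filter Topology SchwartzMap

noncomputable section

open Set

theorem EReal.sInf_coe_image_Ioi (a : ℝ) : sInf ((fun s : ℝ => (s : EReal)) '' Ioi a) = a := by
  have hmono : Monotone ((↑) : ℝ → EReal) := fun _ _ h => EReal.coe_le_coe_iff.2 h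
  rw [← hmono.map_csInf_of_continuousAt continuous_coe_real_ereal.continuousAt nonempty_Ioi
    bddBelow_Ioi, csInf_Ioi]

theorem tendsto_ofReal_rpow_mul_nhdsGT_zero {r : ℝ} (hr : 0 < r) (c : ℂ) :
    Tendsto (fun lam : ℝ => ((lam ^ r : ℝ) : ℂ) * c) (𝓝[>] 0) (𝓝 0) := by
  have hrpow : Tendsto (fun lam : ℝ => lam ^ r) (𝓝[>] 0) (𝓝 0) := by
    simpa [Real.zero_rpow hr.ne'] using
      (Real.continuousAt_rpow_const 0 r (Or.inr hr.le)).tendsto.mono_left nhdsWithin_le_nhds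
  simpa using ((Complex.continuous_ofReal.tendsto 0).comp hrpow).mul_const c

theorem not_tendsto_ofReal_rpow_mul_nhdsGT_zero {r : ℝ} (hr : r ≤ 0) {c : ℂ} (hc : c ≠ 0) :
    ¬ Tendsto (fun lam : ℝ => ((lam ^ r : ℝ) : ℂ) * c) (𝓝[>] 0) (𝓝 0) := by
  intro h
  have hbelow : ∀ᶠ lam : ℝ in 𝓝[>] 0, ‖c‖ ≤ ‖((lam ^ r : ℝ) : ℂ) * c‖ := by
    filter_upwards [Ioc_mem_nhdsGT zero_lt_one] with lam ⟨hlam0, hlam1⟩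
    rw [norm_mul, Complex.norm_real, Real.norm_of_nonneg (Real.rpow_nonneg hlam0.le _)]
    exact le_mul_of_one_le_left (norm_nonneg c)
      (Real.one_le_rpow_of_pos_of_le_one_of_nonpos hlam0 hlam1 hr)
  have : ‖c‖ ≤ 0 := by simpa using ge_of_tendsto h.norm hbelow
  exact hc (norm_le_zero_iff.1 this)

/-- The weak form of `t(λx) = λ^d t(x)` on a `K`-dimensional space. -/
def IsHomogeneousDistribution (E : Type*) [NormedAddCommGroup E] [NormedSpace ℝ E] (K : ℕ)
    (d : ℝ) (t : SchwartzMap E ℂ →L[ℂ] ℂ) : Prop :=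
  ∀ lam : ℝ, 0 < lam → ∀ g : SchwartzMap E ℂ,
    t (scaleHomCLM E lam⁻¹ g) = ((lam ^ ((K : ℝ) + d) : ℝ) : ℂ) * t g

section Homogeneous

variable {E : Type*} [NormedAddCommGroup E] [NormedSpace ℝ E]
variable {K : ℕ} {d : ℝ} {t : SchwartzMap E ℂ →L[ℂ] ℂ}

theorem IsHomogeneousDistribution.rescaled_pairing_eq (ht : IsHomogeneousDistribution E K d t)
    (s : ℝ) (g : SchwartzMap E ℂ) {lam : ℝ} (hlam : 0 < lam) :
    ((lam ^ s * (lam ^ K)⁻¹ : ℝ) : ℂ) * t (scaleHomCLM E lam⁻¹ g)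
      = ((lam ^ (s + d) : ℝ) : ℂ) * t g := by
  rw [ht lam hlam g, ← mul_assoc, ← Complex.ofReal_mul, ← Real.rpow_natCast lam K,
    ← Real.rpow_neg hlam.le, ← Real.rpow_add hlam, ← Real.rpow_add hlam]
  ring_nf

theorem IsHomogeneousDistribution.sdSet_eq_Ioi (ht : IsHomogeneousDistribution E K d t)
    (ht0 : t ≠ 0) : sdSet E K t = Ioi (-d) := by
  have hrescaled : ∀ s g, (fun lam : ℝ => ((lam ^ s * (lam ^ K)⁻¹ : ℝ) : ℂ) *
      t (scaleHomCLM E lam⁻¹ g)) =ᶠ[𝓝[>] 0] fun lam => ((lam ^ (s + d) : ℝ) : ℂ) * t g :=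
    fun s g => eventually_nhdsWithin_of_forall fun _ hlam => ht.rescaled_pairing_eq s g hlam
  ext s
  simp only [sdSet, mem_ofPred_eq, mem_Ioi]
  constructor
  · intro hs
    obtain ⟨g, hg⟩ : ∃ g, t g ≠ 0 := by simpa using DFunLike.ne_iff.mp ht0
    by_contra! hsd
    exact not_tendsto_ofReal_rpow_mul_nhdsGT_zero (by linarith) hg
      ((hs g).congr' (hrescaled s g))
  · intro hs g
    exact (tendsto_ofReal_rpow_mul_nhdsGT_zero (by linarith) (t g)).congr' (hrescaled s g).symm

end Homogeneous

/-- If `t ∈ S'(ℝ^N)` is a nonzero homogeneous distribution of degree `d`,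
i.e. `⟨t, g(·/λ)⟩ = λ^{N+d} ⟨t, g⟩` for all `λ > 0`, then its Steinmann scaling degree
equals `−d`. -/
theorem scalingDegree_of_homogeneous {N : ℕ} (t : TDist N) (d : ℝ) (ht : t ≠ 0)
    (hhom : ∀ lam : ℝ, 0 < lam → ∀ g : TestFun N,
      t (scaleHomCLM (Rn N) lam⁻¹ g) = ((lam ^ ((N : ℝ) + d) : ℝ) : ℂ) * t g) :
    scalingDegree (Rn N) N t = ((-d : ℝ) : EReal) := by
  have hhom' : IsHomogeneousDistribution (Rn N) N d t := hhom
  rw [scalingDegree, hhom'.sdSet_eq_Ioi ht, EReal.sInf_coe_image_Ioi]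
end
end

section
/- For any tempered distribution t ∈ S'(R^N) and any multi-index α, the Steinmann scaling degree satisfies sd(∂^α t) ≤ sd(t) + |α|. -/
/-!
Each `∂ᵢ` is homogeneous of degree one under dilations, so `∂^α (g(·/λ)) = λ^(-|α|) (∂^α g)(·/λ)`.
Hence `⟨∂^α t, g(·/λ)⟩ = ± λ^(-|α|) ⟨t, (∂^α g)(·/λ)⟩`, and every exponent `s` admissible for `t`
makes `s + |α|` admissible for `∂^α t`.
-/

open MeasureTheory Filter Topology SchwartzMap

noncomputable section

/-- Iterated partial derivative `∂^α` on Schwartz functions, for a multi-index `α`. -/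
def pderivMulti (N : ℕ) (α : Fin N → ℕ) : TestFun N →L[ℂ] TestFun N :=
  (List.ofFn fun i => (LineDeriv.lineDerivOpCLM ℂ (TestFun N) (EuclideanSpace.single i (1:ℝ))) ^ (α i)).prod

/-- The distributional derivative `∂^α t`, `⟨∂^α t, g⟩ = (-1)^{|α|} ⟨t, ∂^α g⟩`. -/
def distDeriv {N : ℕ} (α : Fin N → ℕ) (t : TDist N) : TDist N :=
  ((-1 : ℂ) ^ (∑ i, α i)) • (t.comp (pderivMulti N α))

open LineDeriv

section Dilation

variable {E : Type*} [NormedAddCommGroup E] [NormedSpace ℝ E]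

lemma lineDerivOp_scaleHomCLM {a : ℝ} (ha : a ≠ 0) (v : E) (g : SchwartzMap E ℂ) :
    ∂_{v} (scaleHomCLM E a g) = a • scaleHomCLM E a (∂_{v} g) := by
  have hv : smulCLE E a ha v = a • v := rfl
  simp only [scaleHomCLM, ha, dite_false, lineDerivOp_compCLMOfContinuousLinearEquiv, hv,
    lineDerivOp_left_smul, ContinuousLinearMap.map_smul_of_tower]

def IsDilationHomogeneous (D : SchwartzMap E ℂ →L[ℂ] SchwartzMap E ℂ) (k : ℕ) : Prop :=
  ∀ a : ℝ, a ≠ 0 → ∀ g : SchwartzMap E ℂ, D (scaleHomCLM E a g) = a ^ k • scaleHomCLM E a (D g)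

namespace IsDilationHomogeneous

lemma one : IsDilationHomogeneous (1 : SchwartzMap E ℂ →L[ℂ] SchwartzMap E ℂ) 0 := by
  intro a _ g
  simp

lemma mul {D D' : SchwartzMap E ℂ →L[ℂ] SchwartzMap E ℂ} {k k' : ℕ}
    (h : IsDilationHomogeneous D k) (h' : IsDilationHomogeneous D' k') :
    IsDilationHomogeneous (D * D') (k + k') := by
  intro a ha g
  rw [mul_apply_eq_comp, h' a ha, ContinuousLinearMap.map_smul_of_tower, h a ha, smul_smul,
    pow_add, mul_comm, mul_apply_eq_comp]

lemma pow {D : SchwartzMap E ℂ →L[ℂ] SchwartzMap E ℂ} {k : ℕ}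
    (h : IsDilationHomogeneous D k) (n : ℕ) : IsDilationHomogeneous (D ^ n) (n * k) := by
  induction n with
  | zero => simpa using one
  | succ n ih => simpa [pow_succ, Nat.succ_mul] using ih.mul h

lemma prod_ofFn {n : ℕ} {D : Fin n → SchwartzMap E ℂ →L[ℂ] SchwartzMap E ℂ} {k : Fin n → ℕ}
    (h : ∀ i, IsDilationHomogeneous (D i) (k i)) :
    IsDilationHomogeneous (List.ofFn D).prod (∑ i, k i) := by
  induction n with
  | zero => simpa using one
  | succ n ih =>
    rw [List.ofFn_succ, List.prod_cons, Fin.sum_univ_succ]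
    exact (h 0).mul (ih fun i => h i.succ)

end IsDilationHomogeneous

lemma isDilationHomogeneous_lineDerivOpCLM (v : E) :
    IsDilationHomogeneous (lineDerivOpCLM ℂ (SchwartzMap E ℂ) v) 1 := by
  intro a ha g
  simpa using lineDerivOp_scaleHomCLM ha v g

lemma add_mem_sdSet_comp {K k : ℕ} {D : SchwartzMap E ℂ →L[ℂ] SchwartzMap E ℂ}
    (hD : IsDilationHomogeneous D k) (c : ℂ) (t : SchwartzMap E ℂ →L[ℂ] ℂ) {s : ℝ}
    (hs : s ∈ sdSet E K t) : s + k ∈ sdSet E K (c • t.comp D) := by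
  intro g
  have hlim := (hs (D g)).const_mul c
  rw [mul_zero] at hlim
  refine hlim.congr' ?_
  filter_upwards [self_mem_nhdsWithin] with lam (hlam : 0 < lam)
  have hpow : lam ^ (s + k) = lam ^ s * lam ^ k := by
    rw [Real.rpow_add hlam, Real.rpow_natCast]
  have hcancel : (lam : ℂ) ^ k * (lam : ℂ)⁻¹ ^ k = 1 := by
    rw [← mul_pow, mul_inv_cancel₀ (by exact_mod_cast hlam.ne'), one_pow]
  simp only [_root_.smul_apply, ContinuousLinearMap.comp_apply,
    hD _ (inv_ne_zero hlam.ne'), ContinuousLinearMap.map_smul_of_tower, smul_eq_mul,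
    Complex.real_smul, hpow]
  push_cast
  linear_combination (-(c * ((lam ^ s : ℝ) : ℂ) * ((lam : ℂ) ^ K)⁻¹ *
    t (scaleHomCLM E lam⁻¹ (D g)))) * hcancel

end Dilation

lemma isDilationHomogeneous_pderivMulti {N : ℕ} (α : Fin N → ℕ) :
    IsDilationHomogeneous (pderivMulti N α) (∑ i, α i) := by
  refine IsDilationHomogeneous.prod_ofFn fun i => ?_
  simpa using (isDilationHomogeneous_lineDerivOpCLM _).pow (α i)

lemma sInf_coe_image_le_add {A B : Set ℝ} {m : ℝ} (h : ∀ s ∈ A, s + m ∈ B) :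
    sInf ((↑) '' B : Set EReal) ≤ sInf ((↑) '' A : Set EReal) + m := by
  rw [← EReal.sub_le_iff_le_add (.inl (EReal.coe_ne_bot _)) (.inl (EReal.coe_ne_top _))]
  refine le_sInf ?_
  rintro _ ⟨s, hs, rfl⟩
  rw [EReal.sub_le_iff_le_add (.inl (EReal.coe_ne_bot _)) (.inl (EReal.coe_ne_top _)),
    ← EReal.coe_add]
  exact sInf_le ⟨_, h s hs, rfl⟩

/-- For any tempered distribution `t ∈ S'(ℝ^N)` and any multi-index `α`,
the Steinmann scaling degree satisfies `sd(∂^α t) ≤ sd(t) + |α|`. -/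
theorem scalingDegree_distDeriv_le {N : ℕ} (t : TDist N) (α : Fin N → ℕ) :
    scalingDegree (Rn N) N (distDeriv α t) ≤
      scalingDegree (Rn N) N t + ((∑ i, α i : ℕ) : EReal) := by
  rw [← EReal.coe_coe_eq_natCast]
  exact sInf_coe_image_le_add fun s hs =>
    add_mem_sdSet_comp (isDilationHomogeneous_pderivMulti α) _ t hs
end
end

section
/- Let Γ⁻_{n,m} ⊂ R^{4n} × R^{4m} be the set of (y_1,…,y_n; x_1,…,x_m) such that there exists a function u : {1,…,n} → {1,…,m} with y_j ∈ x_{u(j)} − V̄⁺ for all j (each y_j lies in the causal past of some x_{u(j)}), where V̄⁺ = {p ∈ R^4 : p² ≥ 0, p⁰ ≥ 0} is the closed forward light cone in Minkowski space. Then the intersection of Γ⁻_{n,m} with the region {(y,x) : y_1⁰ + … + y_n⁰ + (1/(3n))|(y_1,…,y_n)| ≥ 0} is contained in {(y,x) : |(y_1,…,y_n)| ≤ C·|(x_1,…,x_m)|} for some constant C depending only on n and m, where |·| denotes the Euclidean norm of the concatenated vector. -/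
/-!
Write `p_j = x_{u(j)} - y_j ∈ V̄⁺`. In the forward cone the Euclidean norm is controlled by the
time component, `‖p‖ ≤ 2 p⁰`, so `‖y_j‖ ≤ ‖x_{u(j)}‖ + 2 (x_{u(j)}⁰ - y_j⁰) ≤ 3|x| - 2 y_j⁰`.
Summing over `j`, the lower bound `∑ y_j⁰ ≥ -|y|/(3n)` gives `|y| ≤ 3n|x| + (2/3)|y|`,
hence `|y| ≤ 9n|x|`.
-/

noncomputable section

abbrev R4 : Type := EuclideanSpace ℝ (Fin 4)

/-- The Minkowski square `p² = (p⁰)² − (p¹)² − (p²)² − (p³)²`. -/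
def minkSq (p : R4) : ℝ := p 0 ^ 2 - p 1 ^ 2 - p 2 ^ 2 - p 3 ^ 2

/-- The Euclidean norm of a concatenated vector `(y₁,…,y_n) ∈ ℝ^{4n}`. -/
def concatNorm {n : ℕ} (y : Fin n → R4) : ℝ := Real.sqrt (∑ j, ‖y j‖ ^ 2)

def closedForwardCone : Set R4 := {p | 0 ≤ minkSq p ∧ 0 ≤ p 0}

lemma norm_le_two_mul_of_mem_closedForwardCone {p : R4} (hp : p ∈ closedForwardCone) :
    ‖p‖ ≤ 2 * p 0 := by
  obtain ⟨hsq, htime⟩ := hp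
  have hnorm : ‖p‖ ^ 2 = p 0 ^ 2 + p 1 ^ 2 + p 2 ^ 2 + p 3 ^ 2 := by
    simp only [EuclideanSpace.norm_sq_eq, Real.norm_eq_abs, sq_abs, Fin.sum_univ_four]
  unfold minkSq at hsq
  nlinarith [norm_nonneg p]

lemma norm_le_of_sub_mem_closedForwardCone {x y : R4} (h : x - y ∈ closedForwardCone) :
    ‖y‖ ≤ 3 * ‖x‖ - 2 * y 0 := by
  have hcone : ‖x - y‖ ≤ 2 * (x 0 - y 0) := norm_le_two_mul_of_mem_closedForwardCone h
  have htime : x 0 ≤ ‖x‖ := (le_abs_self _).trans (PiLp.norm_apply_le x 0)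
  calc ‖y‖ = ‖x - (x - y)‖ := by rw [sub_sub_cancel]
    _ ≤ ‖x‖ + ‖x - y‖ := norm_sub_le _ _
    _ ≤ 3 * ‖x‖ - 2 * y 0 := by linarith

lemma norm_le_concatNorm {n : ℕ} (x : Fin n → R4) (i : Fin n) : ‖x i‖ ≤ concatNorm x :=
  (PiLp.norm_apply_le (WithLp.toLp 2 x) i).trans_eq (PiLp.norm_eq_of_L2 _)

lemma concatNorm_le_sum_norm {n : ℕ} (y : Fin n → R4) : concatNorm y ≤ ∑ j, ‖y j‖ := by
  have hsum : 0 ≤ ∑ j, ‖y j‖ := Finset.sum_nonneg fun j _ => norm_nonneg _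
  refine Real.sqrt_le_iff.mpr ⟨hsum, ?_⟩
  exact Finset.sum_sq_le_sq_sum_of_nonneg fun j _ => norm_nonneg _

lemma one_div_three_mul_natCast_le (n : ℕ) : 1 / (3 * (n : ℝ)) ≤ 1 / 3 := by
  rcases Nat.eq_zero_or_pos n with rfl | hn
  · norm_num
  · have : (1 : ℝ) ≤ n := by exact_mod_cast hn
    gcongr
    linarith

/-- The intersection of the cone `Γ⁻_{n,m}` (each `y_j` lies in the causal
past of some `x_{u(j)}`) with the region `{y₁⁰+…+y_n⁰ + (1/(3n))|(y₁,…,y_n)| ≥ 0}` is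
contained in `{|(y₁,…,y_n)| ≤ C |(x₁,…,x_m)|}` for some constant `C` depending only on
`n` and `m`. -/
theorem cone_intersection_estimate (n m : ℕ) :
    ∃ C : ℝ, ∀ (y : Fin n → R4) (x : Fin m → R4) (u : Fin n → Fin m),
      (∀ j, 0 ≤ minkSq (x (u j) - y j) ∧ 0 ≤ (x (u j) - y j) 0) →
      0 ≤ (∑ j, y j 0) + (1 / (3 * (n : ℝ))) * concatNorm y →
      concatNorm y ≤ C * concatNorm x := by
  refine ⟨9 * n, fun y x u hcone hsum => ?_⟩
  have hterm (j : Fin n) : ‖y j‖ ≤ 3 * concatNorm x - 2 * y j 0 :=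
    (norm_le_of_sub_mem_closedForwardCone (hcone j)).trans
      (by linarith [norm_le_concatNorm x (u j)])
  have hY : concatNorm y ≤ 3 * n * concatNorm x - 2 * ∑ j, y j 0 :=
    calc concatNorm y ≤ ∑ j, ‖y j‖ := concatNorm_le_sum_norm y
      _ ≤ ∑ j, (3 * concatNorm x - 2 * y j 0) := Finset.sum_le_sum fun j _ => hterm j
      _ = 3 * n * concatNorm x - 2 * ∑ j, y j 0 := by
        simp only [Finset.sum_sub_distrib, ← Finset.mul_sum, Finset.sum_const,
          Finset.card_univ, Fintype.card_fin, nsmul_eq_mul]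
        ring
  have hY0 : 0 ≤ concatNorm y := Real.sqrt_nonneg _
  linarith [mul_le_mul_of_nonneg_right (one_div_three_mul_natCast_le n) hY0]
end
end
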